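/- arXiv:1510.06964 — 6 statements merged into one kernel-verified Lean document; each statement's English description precedes it below -/
import Mathlib

section
/- Let d ≥ 0 and k ≥ d+1 be integers. If G is a d-degenerate graph, then the set of proper k-colourings of G forms a single Kempe class. -/
open SimpleGraph
open scoped Classical

variable {V : Type*}

def IsProperColoring (G : SimpleGraph V) (k : ℕ) (c : V → Fin k) : Prop :=
  ∀ ⦃u v : V⦄, G.Adj u v → c u ≠ c v

def KempeStep (G : SimpleGraph V) (k : ℕ) (c c' : V → Fin k) : Prop :=
  ∃ a b : Fin k, ∃ v0 : {x : V | c x = a ∨ c x = b},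
    ∀ v : V, c' v =
      if h : c v = a ∨ c v = b then
        if (G.induce {x : V | c x = a ∨ c x = b}).Reachable v0 ⟨v, h⟩
          then Equiv.swap a b (c v) else c v
      else c v

def KempeEquiv (G : SimpleGraph V) (k : ℕ) (c c' : V → Fin k) : Prop :=
  Relation.ReflTransGen (KempeStep G k) c c'

def KempeClass (G : SimpleGraph V) (k : ℕ) : Prop :=
  ∀ c c' : V → Fin k, IsProperColoring G k c → IsProperColoring G k c' →
    KempeEquiv G k c c'

def Degenerate (G : SimpleGraph V) (d : ℕ) : Prop :=
  ∀ S : Set V, S.Nonempty → ∃ v ∈ S, (S ∩ G.neighborSet v).ncard ≤ d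

def ThreeConnected [Fintype V] (G : SimpleGraph V) : Prop :=
  3 < Fintype.card V ∧ ∀ S : Set V, S.ncard ≤ 2 → (G.induce Sᶜ).Connected

/-!
Induction on the number of vertices. Delete a vertex `v` of degree at most `d`; by induction the
restrictions of two proper colourings are joined by Kempe changes in `G - v`, and each of these
lifts to `G`. A change swapping `a` and `b` lifts verbatim unless `v` is coloured `a` or `b` and
has two neighbours of these colours, since deleting a vertex outside the `a`-`b` subgraph, or a
leaf of it, does not split a Kempe chain. In that case the two neighbours share the colour other
than that of `v`, so the at most `d` neighbours of `v` miss one of the `k - 1 ≥ d` colours other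
than that of `v`; this colour is neither `a` nor `b`, and recolouring `v` with it is itself a
Kempe change. Once the colourings agree off `v`, one last Kempe change recolours `v`.
-/

section

variable {G : SimpleGraph V} {k d : ℕ} {c c' : V → Fin k}

theorem IsProperColoring.induce (hc : IsProperColoring G k c) (s : Set V) :
    IsProperColoring (G.induce s) k (s.domRestrict c) :=
  fun _ _ h => hc h

theorem KempeStep.isProperColoring (h : KempeStep G k c c') (hc : IsProperColoring G k c) :
    IsProperColoring G k c' := by
  obtain ⟨a, b, v₀, hc'⟩ := h
  intro u w huw
  have hchain : ∀ hu hw, (G.induce {x | c x = a ∨ c x = b}).Reachable v₀ ⟨u, hu⟩ ↔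
      (G.induce {x | c x = a ∨ c x = b}).Reachable v₀ ⟨w, hw⟩ := fun _ _ =>
    ⟨(·.trans (Adj.reachable huw)), (·.trans (Adj.reachable huw.symm))⟩
  have := hc huw
  rw [hc' u, hc' w]
  split_ifs <;> grind

theorem KempeEquiv.isProperColoring (h : KempeEquiv G k c c') (hc : IsProperColoring G k c) :
    IsProperColoring G k c' := by
  induction h with
  | refl => exact hc
  | tail _ hstep ih => exact hstep.isProperColoring ih

theorem SimpleGraph.Reachable.eq_of_forall_not_adj {W : Type*} {H : SimpleGraph W} {x y : W}
    (h : H.Reachable x y) (hx : ∀ z, ¬H.Adj x z) : x = y := by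
  obtain ⟨p⟩ := h
  cases p with
  | nil => rfl
  | cons h _ => exact absurd h (hx _)

theorem kempeStep_update (hc : IsProperColoring G k c) {v : V} {z : Fin k}
    (hz : ∀ u, G.Adj v u → c u ≠ z) : KempeStep G k c (Function.update c v z) := by
  refine ⟨c v, z, ⟨v, Or.inl rfl⟩, fun x => ?_⟩
  have hiso : ∀ y, ¬(G.induce {x | c x = c v ∨ c x = z}).Adj ⟨v, Or.inl rfl⟩ y := by
    rintro ⟨y, hy | hy⟩ hadj
    exacts [hc hadj hy.symm, hz y hadj hy]
  by_cases hxv : x = v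
  · subst hxv
    simp
  · have hnr : ∀ hx, ¬(G.induce {x | c x = c v ∨ c x = z}).Reachable ⟨v, Or.inl rfl⟩ ⟨x, hx⟩ :=
      fun _ hr => hxv (congrArg Subtype.val (hr.eq_of_forall_not_adj hiso)).symm
    simp_all

theorem kempeStep_of_eqOn_compl_singleton (hc : IsProperColoring G k c)
    (hc' : IsProperColoring G k c') {v : V}
    (h : Set.EqOn c c' {v}ᶜ) : KempeStep G k c c' := by
  convert kempeStep_update hc (v := v) (z := c' v) fun u hvu => h hvu.ne' ▸ hc' hvu.symm
  ext x
  by_cases hx : x = v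
  · simp [hx]
  · simp [hx, h hx]

theorem SimpleGraph.Reachable.induce_of_subsingleton_neighborSet {W : Type*} {H : SimpleGraph W}
    {s : Set W} (hs : ∀ w ∉ s, (H.neighborSet w).Subsingleton) {x y : W} (hx : x ∈ s)
    (hy : y ∈ s) (h : H.Reachable x y) : (H.induce s).Reachable ⟨x, hx⟩ ⟨y, hy⟩ := by
  obtain ⟨p, hp⟩ := h.exists_isPath
  refine ⟨p.induce s fun w hw => ?_⟩
  by_contra hws
  exact hp.isTrail.not_mem_support_of_subsingleton_neighborSet (by grind) (by grind) (hs _ hws) hw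

theorem reachable_induce_compl_singleton_induce_iff {A : Set V} {v : V}
    (hv : v ∈ A → (A ∩ G.neighborSet v).Subsingleton) {x y : ({v}ᶜ : Set V)} (hx : ↑x ∈ A)
    (hy : ↑y ∈ A) :
    ((G.induce {v}ᶜ).induce {z | ↑z ∈ A}).Reachable ⟨x, hx⟩ ⟨y, hy⟩ ↔
      (G.induce A).Reachable ⟨x, hx⟩ ⟨y, hy⟩ := by
  refine ⟨(·.map (⟨fun z => ⟨z.1.1, z.2⟩, id⟩ : _ →g G.induce A)), fun h => ?_⟩
  have hleaf : ∀ w ∉ {z : A | ↑z ≠ v}, ((G.induce A).neighborSet w).Subsingleton := by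
    rintro ⟨w, hwA⟩ hwv z hz z' hz'
    obtain rfl : w = v := not_not.mp hwv
    exact Subtype.ext (hv hwA ⟨z.2, hz⟩ ⟨z'.2, hz'⟩)
  exact (h.induce_of_subsingleton_neighborSet hleaf x.2 y.2).map
    (⟨fun z => ⟨⟨z.1.1, z.2⟩, z.1.2⟩, id⟩ : _ →g (G.induce {v}ᶜ).induce {z | ↑z ∈ A})

def KempeStepOn (G : SimpleGraph V) (k : ℕ) (a b : Fin k) (c c' : V → Fin k) : Prop :=
  ∃ v₀ : {x : V | c x = a ∨ c x = b}, ∀ v : V, c' v =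
    if h : c v = a ∨ c v = b then
      if (G.induce {x : V | c x = a ∨ c x = b}).Reachable v₀ ⟨v, h⟩
        then Equiv.swap a b (c v) else c v
    else c v

theorem KempeStepOn.kempeStep {a b : Fin k} (h : KempeStepOn G k a b c c') : KempeStep G k c c' :=
  ⟨a, b, h⟩

theorem KempeStepOn.exists_lift_compl_singleton {a b : Fin k} {v : V}
    {e : ({v}ᶜ : Set V) → Fin k}
    (h : KempeStepOn (G.induce {v}ᶜ) k a b (({v}ᶜ : Set V).domRestrict c) e)
    (hv : c v = a ∨ c v = b → ({x | c x = a ∨ c x = b} ∩ G.neighborSet v).Subsingleton) :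
    ∃ c', KempeStepOn G k a b c c' ∧ ({v}ᶜ : Set V).domRestrict c' = e := by
  obtain ⟨v₀, he⟩ := h
  refine ⟨_, ⟨⟨v₀.1.1, v₀.2⟩, fun _ => rfl⟩, funext fun x => ?_⟩
  have key := fun hx => reachable_induce_compl_singleton_induce_iff
    (A := {x | c x = a ∨ c x = b}) hv (x := v₀.1) (y := x) v₀.2 hx
  rw [he x]
  exact dite_congr rfl (fun hx => if_congr (key hx).symm rfl rfl) fun _ => rfl

theorem exists_ne_forall_adj_ne_of_adj_eq [Finite V] (hk : d + 1 ≤ k) {v : V}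
    (hdeg : (G.neighborSet v).ncard ≤ d) (c : V → Fin k) {w₁ w₂ : V} (h₁ : G.Adj v w₁)
    (h₂ : G.Adj v w₂) (hne : w₁ ≠ w₂) (heq : c w₁ = c w₂) :
    ∃ z ≠ c v, ∀ u, G.Adj v u → c u ≠ z := by
  by_contra! hcover
  have hsub : ({c v}ᶜ : Set (Fin k)) ⊆ c '' (G.neighborSet v \ {w₂}) := by
    intro z hz
    obtain ⟨u, hu, rfl⟩ := hcover z hz
    by_cases huw : u = w₂
    · exact ⟨w₁, ⟨h₁, hne⟩, huw ▸ heq⟩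
    · exact ⟨u, ⟨hu, huw⟩, rfl⟩
  have hpos : 0 < (G.neighborSet v).ncard := (Set.ncard_pos (Set.toFinite _)).mpr ⟨w₁, h₁⟩
  have hcompl : ({c v}ᶜ : Set (Fin k)).ncard = k - 1 := by
    rw [Set.ncard_compl, Set.ncard_singleton, Nat.card_eq_fintype_card, Fintype.card_fin]
  have : k - 1 ≤ (G.neighborSet v).ncard - 1 := calc
    k - 1 = ({c v}ᶜ : Set (Fin k)).ncard := hcompl.symm
    _ ≤ (c '' (G.neighborSet v \ {w₂})).ncard := Set.ncard_le_ncard hsub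
    _ ≤ (G.neighborSet v \ {w₂}).ncard := Set.ncard_image_le (Set.toFinite _)
    _ = (G.neighborSet v).ncard - 1 := Set.ncard_sdiff_singleton_of_mem h₂
  omega

theorem exists_free_color_of_not_subsingleton [Finite V] (hk : d + 1 ≤ k) {v : V}
    (hdeg : (G.neighborSet v).ncard ≤ d) (hc : IsProperColoring G k c) {a b : Fin k}
    (hv : c v = a ∨ c v = b)
    (hab : ¬({x | c x = a ∨ c x = b} ∩ G.neighborSet v).Subsingleton) :
    ∃ z, ¬(z = a ∨ z = b) ∧ ∀ u, G.Adj v u → c u ≠ z := by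
  obtain ⟨w₁, ⟨hw₁, h₁⟩, w₂, ⟨hw₂, h₂⟩, hne⟩ := Set.not_subsingleton_iff.mp hab
  have hc₁ := hc h₁
  have hc₂ := hc h₂
  obtain ⟨z, hzv, hz⟩ := exists_ne_forall_adj_ne_of_adj_eq hk hdeg c h₁ h₂ hne (by grind)
  have := hz w₁ h₁
  exact ⟨z, by grind, hz⟩

theorem KempeStep.exists_lift_compl_singleton [Finite V] (hk : d + 1 ≤ k) {v : V}
    (hdeg : (G.neighborSet v).ncard ≤ d) (hc : IsProperColoring G k c)
    {e : ({v}ᶜ : Set V) → Fin k}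
    (h : KempeStep (G.induce {v}ᶜ) k (({v}ᶜ : Set V).domRestrict c) e) :
    ∃ c', KempeEquiv G k c c' ∧ ({v}ᶜ : Set V).domRestrict c' = e := by
  obtain ⟨a, b, h⟩ := h
  by_cases hfree : ∃ z, ¬(z = a ∨ z = b) ∧ ∀ u, G.Adj v u → c u ≠ z
  · obtain ⟨z, hzab, hz⟩ := hfree
    have hres : ({v}ᶜ : Set V).domRestrict (Function.update c v z) =
        ({v}ᶜ : Set V).domRestrict c :=
      funext fun x => by simp [Function.update_of_ne (Set.mem_compl_singleton_iff.mp x.2)]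
    obtain ⟨c', hstep, rfl⟩ :=
      KempeStepOn.exists_lift_compl_singleton (hres ▸ h) (by simp [hzab])
    exact ⟨c', .head (kempeStep_update hc hz) (.single hstep.kempeStep), rfl⟩
  · obtain ⟨c', hstep, rfl⟩ := KempeStepOn.exists_lift_compl_singleton h fun hv =>
      not_not.mp fun hab => hfree (exists_free_color_of_not_subsingleton hk hdeg hc hv hab)
    exact ⟨c', .single hstep.kempeStep, rfl⟩

theorem KempeEquiv.exists_lift_compl_singleton [Finite V] (hk : d + 1 ≤ k) {v : V}
    (hdeg : (G.neighborSet v).ncard ≤ d) (hc : IsProperColoring G k c)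
    {e : ({v}ᶜ : Set V) → Fin k}
    (h : KempeEquiv (G.induce {v}ᶜ) k (({v}ᶜ : Set V).domRestrict c) e) :
    ∃ c', KempeEquiv G k c c' ∧ ({v}ᶜ : Set V).domRestrict c' = e := by
  induction h with
  | refl => exact ⟨c, .refl, rfl⟩
  | tail _ hstep ih =>
    obtain ⟨c₁, h₁, rfl⟩ := ih
    obtain ⟨c₂, h₂, rfl⟩ := hstep.exists_lift_compl_singleton hk hdeg (h₁.isProperColoring hc)
    exact ⟨c₂, h₁.trans h₂, rfl⟩

theorem Degenerate.induce [Finite V] (hdeg : Degenerate G d) (s : Set V) :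
    Degenerate (G.induce s) d := by
  rintro T ⟨t, ht⟩
  obtain ⟨_, ⟨w, hwT, rfl⟩, hw⟩ := hdeg (Subtype.val '' T) ⟨t, t, ht, rfl⟩
  refine ⟨w, hwT, ?_⟩
  rw [← Set.ncard_image_of_injective _ Subtype.val_injective]
  refine le_trans (Set.ncard_le_ncard ?_ (Set.toFinite _)) hw
  rintro _ ⟨z, ⟨hzT, hzN⟩, rfl⟩
  exact ⟨⟨z, hzT, rfl⟩, hzN⟩

end

/-- If `k ≥ d + 1` and `G` is `d`-degenerate, then the proper
`k`-colourings of `G` form a single Kempe class. -/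
theorem stmt1 {V : Type*} [Fintype V] (d k : ℕ) (hk : d + 1 ≤ k) (G : SimpleGraph V)
    (hdeg : Degenerate G d) : KempeClass G k := by
  induction hn : Fintype.card V generalizing V with
  | zero =>
    intro c c' _ _
    have := Fintype.card_eq_zero_iff.mp hn
    exact Subsingleton.elim c c' ▸ .refl
  | succ n ih =>
    intro c c' hc hc'
    have : Nonempty V := Fintype.card_pos_iff.mp (by omega)
    obtain ⟨v, -, hv⟩ := hdeg Set.univ Set.univ_nonempty
    rw [Set.univ_inter] at hv
    have hcard : Fintype.card ({v}ᶜ : Set V) = n := by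
      rw [Fintype.card_compl_set, hn]; simp
    obtain ⟨c₂, h₂, hres⟩ := KempeEquiv.exists_lift_compl_singleton hk hv hc
      (ih (G.induce {v}ᶜ) (hdeg.induce _) hcard _ _ (hc.induce _) (hc'.induce _))
    exact h₂.tail (kempeStep_of_eqOn_compl_singleton (h₂.isProperColoring hc) hc'
      fun u hu => congrFun hres ⟨u, hu⟩)
end

section
/- Let k be a positive integer, G = (V,E) a graph and S ⊆ V with |S| ≤ k. If G[V∖S] is connected, every vertex of V∖S has degree at most k in G, and some vertex x ∈ V∖S has degree at most k−1 in G, then every proper k-colouring of G[S] can be extended to a proper k-colouring of G. -/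
open SimpleGraph
open scoped Classical

variable {V : Type*}

/-!
Colour the vertices outside `S` greedily: repeatedly pick, among the uncoloured vertices other
than `x`, one farthest from `x` in `G[V ∖ S]`, and colour `x` last. The next vertex on a shortest
path from such a vertex to `x` is still uncoloured, so fewer than `k` of its at most `k`
neighbours carry a colour; `x` has at most `k - 1` neighbours in all. Either way a colour is free.
-/

variable {G : SimpleGraph V} {k : ℕ}

theorem SimpleGraph.Reachable.exists_adj_dist_lt {u v : V} (h : G.Reachable u v) (hne : u ≠ v) :
    ∃ w, G.Adj v w ∧ G.dist u w < G.dist u v := by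
  obtain ⟨p, hp⟩ := h.symm.exists_walk_length_eq_dist
  cases p with
  | nil => exact absurd rfl hne
  | cons hvw q =>
    refine ⟨_, hvw, ?_⟩
    calc G.dist u _ = G.dist _ u := dist_comm
      _ ≤ q.length := dist_le q
      _ < (q.cons hvw).length := by rw [Walk.length_cons]; omega
      _ = G.dist u v := hp.trans dist_comm

theorem SimpleGraph.Connected.exists_dist_descent_induce {U : Set V}
    (hU : (G.induce U).Connected) {x : V} (hx : x ∈ U) :
    ∃ d : V → ℕ, ∀ v ∈ U, v ≠ x → ∃ w ∈ U, G.Adj v w ∧ d w < d v := by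
  classical
  refine ⟨fun v => if hv : v ∈ U then (G.induce U).dist ⟨x, hx⟩ ⟨v, hv⟩ else 0, ?_⟩
  intro v hv hvx
  obtain ⟨w, hvw, hlt⟩ := (hU.preconnected ⟨x, hx⟩ ⟨v, hv⟩).exists_adj_dist_lt
    fun h => hvx (congrArg Subtype.val h).symm
  exact ⟨w, w.2, hvw, by simpa [hv, w.2] using hlt⟩

theorem SimpleGraph.encard_neighborSet {v : V} [Fintype (G.neighborSet v)] :
    (G.neighborSet v).encard = G.degree v := by
  rw [← coe_neighborFinset, Set.encard_coe_eq_coe_finsetCard, card_neighborFinset_eq_degree]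

theorem exists_fin_forall_ne_of_encard_lt {α : Type*} {s : Set α} (hs : s.encard < k)
    (f : α → Fin k) : ∃ a, ∀ u ∈ s, f u ≠ a := by
  by_contra! h
  have hsurj : f '' s = Set.univ := Set.eq_univ_of_forall fun a => by
    obtain ⟨u, hu, rfl⟩ := h a
    exact Set.mem_image_of_mem f hu
  have := Set.encard_image_le f s
  rw [hsurj, Set.encard_univ, ENat.card_eq_coe_fintype_card, Fintype.card_fin] at this
  exact (this.trans_lt hs).false

def IsProperColoringOn (G : SimpleGraph V) (k : ℕ) (C : Set V) (c : V → Fin k) : Prop :=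
  ∀ ⦃u v : V⦄, u ∈ C → v ∈ C → G.Adj u v → c u ≠ c v

theorem isProperColoringOn_univ {c : V → Fin k} :
    IsProperColoringOn G k Set.univ c ↔ IsProperColoring G k c :=
  ⟨fun h _ _ => h trivial trivial, fun h _ _ _ _ => @h _ _⟩

theorem IsProperColoringOn.update_insert [DecidableEq V] {C : Set V} {c : V → Fin k} {v : V}
    {a : Fin k} (hc : IsProperColoringOn G k C c) (ha : ∀ u ∈ C, G.Adj v u → c u ≠ a) :
    IsProperColoringOn G k (insert v C) (Function.update c v a) := by
  intro u w hu hw huw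
  rcases eq_or_ne u v with rfl | hu'
  · rw [Function.update_self, Function.update_of_ne huw.ne']
    exact (ha w (hw.resolve_left huw.ne') huw).symm
  rcases eq_or_ne w v with rfl | hw'
  · rw [Function.update_self, Function.update_of_ne hu']
    exact ha u (hu.resolve_left hu') huw.symm
  rw [Function.update_of_ne hu', Function.update_of_ne hw']
  exact hc (hu.resolve_left hu') (hw.resolve_left hw') huw

theorem IsProperColoringOn.exists_update_insert [DecidableEq V] {C : Set V} {c : V → Fin k}
    {v : V} (hc : IsProperColoringOn G k C c) (hv : (C ∩ G.neighborSet v).encard < k) :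
    ∃ a, IsProperColoringOn G k (insert v C) (Function.update c v a) := by
  obtain ⟨a, ha⟩ := exists_fin_forall_ne_of_encard_lt hv c
  exact ⟨a, hc.update_insert fun u hu hvu => ha u ⟨hu, hvu⟩⟩

theorem IsProperColoringOn.exists_extension_of_descent [Fintype V] [DecidableRel G.Adj]
    {C : Set V} {c : V → Fin k} {x : V} (hc : IsProperColoringOn G k C c) (hx : x ∉ C)
    (hxdeg : G.degree x < k) (hdeg : ∀ v ∉ C, G.degree v ≤ k) (d : V → ℕ)
    (hd : ∀ v ∉ C, v ≠ x → ∃ w ∉ C, G.Adj v w ∧ d w < d v) :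
    ∃ c' : V → Fin k, IsProperColoring G k c' ∧ ∀ v ∈ C, c' v = c v := by
  classical
  by_cases hrest : (Cᶜ \ {x}).Nonempty
  · obtain ⟨v, ⟨hvC, hvx⟩, hmax⟩ := Set.exists_max_image _ d (Set.toFinite _) hrest
    obtain ⟨w, hwC, hvw, -⟩ := hd v hvC hvx
    have hfew : (C ∩ G.neighborSet v).encard < k :=
      calc (C ∩ G.neighborSet v).encard
          < (G.neighborSet v).encard := (Set.toFinite _).encard_lt_encard
            ⟨Set.inter_subset_right, fun h => hwC (h hvw).1⟩
        _ = G.degree v := encard_neighborSet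
        _ ≤ k := by exact_mod_cast hdeg v hvC
    obtain ⟨a, ha⟩ := hc.exists_update_insert hfew
    have hd' : ∀ u ∉ insert v C, u ≠ x → ∃ w ∉ insert v C, G.Adj u w ∧ d w < d u := by
      intro u hu hux
      rw [Set.mem_insert_iff, not_or] at hu
      obtain ⟨w, hwC, huw, hlt⟩ := hd u hu.2 hux
      have : d u ≤ d v := hmax u ⟨hu.2, hux⟩
      refine ⟨w, ?_, huw, hlt⟩
      rintro (rfl | hw)
      exacts [by omega, hwC hw]
    obtain ⟨c', hc', hagree⟩ := IsProperColoringOn.exists_extension_of_descent ha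
      (by simp [hx, Ne.symm hvx]) hxdeg (fun u hu => hdeg u (hu ∘ Or.inr)) d hd'
    refine ⟨c', hc', fun u hu => ?_⟩
    rw [hagree u (Or.inr hu), Function.update_of_ne (ne_of_mem_of_not_mem hu hvC)]
  · have hcover : insert x C = Set.univ := by
      refine Set.eq_univ_of_forall fun u => ?_
      by_contra hu
      rw [Set.mem_insert_iff, not_or] at hu
      exact hrest ⟨u, hu.2, hu.1⟩
    have hfew : (C ∩ G.neighborSet x).encard < k :=
      calc (C ∩ G.neighborSet x).encard
          ≤ (G.neighborSet x).encard := Set.encard_le_encard Set.inter_subset_right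
        _ = G.degree x := encard_neighborSet
        _ < k := by exact_mod_cast hxdeg
    obtain ⟨a, ha⟩ := hc.exists_update_insert hfew
    rw [hcover, isProperColoringOn_univ] at ha
    exact ⟨_, ha, fun u hu => Function.update_of_ne (ne_of_mem_of_not_mem hu hx) _ _⟩
termination_by Cᶜ.ncard
decreasing_by exact Set.ncard_lt_ncard (compl_lt_compl_iff_lt.mpr (Set.ssubset_insert hvC))

theorem stmt3_general {V : Type*} [Fintype V] (k : ℕ) (hk : 0 < k)
    (G : SimpleGraph V) [DecidableRel G.Adj] (S : Set V)
    (hconn : (G.induce Sᶜ).Connected)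
    (hdeg : ∀ v : V, v ∉ S → G.degree v ≤ k)
    (x : V) (hx : x ∉ S) (hxdeg : G.degree x ≤ k - 1)
    (c0 : S → Fin k) (hc0 : ∀ a b : S, G.Adj ↑a ↑b → c0 a ≠ c0 b) :
    ∃ c : V → Fin k, IsProperColoring G k c ∧ ∀ a : S, c ↑a = c0 a := by
  obtain ⟨d, hd⟩ := hconn.exists_dist_descent_induce hx
  let c : V → Fin k := fun v => if hv : v ∈ S then c0 ⟨v, hv⟩ else ⟨0, hk⟩
  have hc : IsProperColoringOn G k S c := fun u v hu hv huv => by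
    simpa [c, hu, hv] using hc0 ⟨u, hu⟩ ⟨v, hv⟩ huv
  obtain ⟨c', hc', hagree⟩ := hc.exists_extension_of_descent hx (by omega) hdeg d hd
  exact ⟨c', hc', fun a => (hagree a a.2).trans (dif_pos a.2)⟩

/-- extension lemma for a set `S` of at most `k` vertices. -/
theorem stmt3 {V : Type*} [Fintype V] [DecidableEq V] (k : ℕ) (hk : 0 < k)
    (G : SimpleGraph V) [DecidableRel G.Adj] (S : Set V) (hS : S.ncard ≤ k)
    (hconn : (G.induce Sᶜ).Connected)
    (hdeg : ∀ v : V, v ∉ S → G.degree v ≤ k)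
    (x : V) (hx : x ∉ S) (hxdeg : G.degree x ≤ k - 1)
    (c0 : S → Fin k) (hc0 : ∀ a b : S, G.Adj ↑a ↑b → c0 a ≠ c0 b) :
    ∃ c : V → Fin k, IsProperColoring G k c ∧ ∀ a : S, c ↑a = c0 a :=
  stmt3_general k hk G S hconn hdeg x hx hxdeg c0 hc0
end

section
/- Let k ≥ 3 be an integer and let G be a 3-connected graph of maximum degree k. If u and v are non-adjacent vertices of G with a common neighbour, then the graph G_{u+v} obtained from G by identifying u and v is (k−1)-degenerate. -/
open SimpleGraph
open scoped Classical

variable {V : Type*}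

/-- The graph `G_{u+v}` obtained from `G` by identifying the non-adjacent vertices
`u` and `v`: the vertex `v` is removed and `u` becomes adjacent to all former
neighbours of `v`. -/
def Identify (G : SimpleGraph V) (u v : V) : SimpleGraph {x : V // x ≠ v} :=
  SimpleGraph.fromRel (fun x y => G.Adj ↑x ↑y ∨ ((x : V) = u ∧ G.Adj v ↑y))

lemma aux_closed {W : Type*} {G : SimpleGraph W} (hG : G.Connected) {S : Set W}
    (hcl : ∀ ⦃x y⦄, x ∈ S → G.Adj x y → y ∈ S) (hne : S.Nonempty) : ∀ t, t ∈ S := by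
  obtain ⟨s, hs⟩ := hne
  intro t
  obtain ⟨p⟩ := hG.preconnected s t
  induction p with
  | nil => exact hs
  | cons h p ih => exact ih (hcl hs h)

lemma identify_adj {G : SimpleGraph V} {u v : V} (huv : ¬ G.Adj u v)
    {x y : {a : V // a ≠ v}} (hx : (x : V) ≠ u) :
    (Identify G u v).Adj x y ↔ (x : V) ≠ y ∧ (G.Adj x y ∨ ((y : V) = u ∧ G.Adj v x)) := by
  rw [Identify, SimpleGraph.fromRel_adj]
  constructor
  · rintro ⟨hxy, h | h⟩
    · refine ⟨fun e => hxy (Subtype.ext e), ?_⟩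
      rcases h with h | ⟨h, _⟩
      · exact Or.inl h
      · exact absurd h hx
    · refine ⟨fun e => hxy (Subtype.ext e), ?_⟩
      rcases h with h | ⟨h, h2⟩
      · exact Or.inl h.symm
      · exact Or.inr ⟨h, h2⟩
  · rintro ⟨hxy, h⟩
    refine ⟨fun e => hxy (congrArg Subtype.val e), ?_⟩
    rcases h with h | ⟨h, h2⟩
    · exact Or.inl (Or.inl h)
    · exact Or.inr (Or.inr ⟨h, h2⟩)

theorem stmt5_aux {V : Type*} [Fintype V] [DecidableEq V] (k : ℕ) (hk : 3 ≤ k)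
    (G : SimpleGraph V) [DecidableRel G.Adj]
    (h3c : 3 < Fintype.card V ∧ ∀ S : Set V, S.ncard ≤ 2 → (G.induce Sᶜ).Connected)
    (hdeg : ∀ w : V, G.degree w ≤ k)
    (u v : V) (hne : u ≠ v) (huv : ¬ G.Adj u v)
    (hcommon : ∃ w : V, G.Adj u w ∧ G.Adj v w) :
    ∀ S : Set {x : V // x ≠ v}, S.Nonempty →
      ∃ x ∈ S, (S ∩ (Identify G u v).neighborSet x).ncard ≤ k - 1 := by
  classical
  obtain ⟨w, hwu, hwv⟩ := hcommon
  have hwnu : w ≠ u := (G.ne_of_adj hwu).symm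
  have hwnv : w ≠ v := (G.ne_of_adj hwv).symm
  -- ncard of full G neighbor set
  have hNG : ∀ x : V, (G.neighborSet x).ncard = G.degree x := by
    intro x
    rw [Set.ncard_eq_toFinset_card']
    rfl
  -- degree bound for non-u vertices in the identified graph
  have hbound : ∀ x : {a : V // a ≠ v}, (x : V) ≠ u →
      ((Identify G u v).neighborSet x).ncard ≤ k := by
    intro x hx
    set N := (Identify G u v).neighborSet x with hN
    set f : {a : V // a ≠ v} → V := fun y => if (y : V) = u ∧ ¬ G.Adj x u then v else y with hf
    have hmaps : ∀ y ∈ N, f y ∈ G.neighborSet (x : V) := by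
      intro y hy
      rw [SimpleGraph.mem_neighborSet, identify_adj huv hx] at hy
      obtain ⟨hxy, hadj⟩ := hy
      by_cases hc : (y : V) = u ∧ ¬ G.Adj (x : V) u
      · simp only [hf, if_pos hc]
        rcases hadj with h | ⟨h, h2⟩
        · exact absurd (hc.1 ▸ h) hc.2
        · exact h2.symm
      · simp only [hf, if_neg hc]
        rcases hadj with h | ⟨h, h2⟩
        · exact h
        · push_neg at hc
          exact h ▸ (hc h)
    have hinj : Set.InjOn f N := by
      intro y1 h1 y2 h2 he
      by_cases hc1 : (y1 : V) = u ∧ ¬ G.Adj (x : V) u <;>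
        by_cases hc2 : (y2 : V) = u ∧ ¬ G.Adj (x : V) u
      · exact Subtype.ext (hc1.1.trans hc2.1.symm)
      · simp only [hf, if_pos hc1, if_neg hc2] at he
        exact absurd he.symm y2.2
      · simp only [hf, if_neg hc1, if_pos hc2] at he
        exact absurd he y1.2
      · simp only [hf, if_neg hc1, if_neg hc2] at he
        exact Subtype.ext he
    calc N.ncard ≤ (G.neighborSet (x : V)).ncard :=
          Set.ncard_le_ncard_of_injOn f hmaps hinj (Set.toFinite _)
      _ = G.degree (x : V) := hNG _
      _ ≤ k := hdeg _
  -- the common neighbour has at most k-1 neighbours in the identified graph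
  have hwdeg : ((Identify G u v).neighborSet ⟨w, hwnv⟩).ncard ≤ k - 1 := by
    have hmaps : ∀ y ∈ (Identify G u v).neighborSet ⟨w, hwnv⟩,
        (y : V) ∈ G.neighborSet w \ {v} := by
      intro y hy
      rw [SimpleGraph.mem_neighborSet, identify_adj huv hwnu] at hy
      obtain ⟨hxy, hadj⟩ := hy
      refine ⟨?_, y.2⟩
      rcases hadj with h | ⟨h, _⟩
      · exact h
      · exact h ▸ hwu.symm
    have hinj : Set.InjOn (fun y : {a : V // a ≠ v} => (y : V))
        ((Identify G u v).neighborSet ⟨w, hwnv⟩) := fun a _ b _ h => Subtype.ext h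
    have h1 : ((Identify G u v).neighborSet ⟨w, hwnv⟩).ncard ≤
        (G.neighborSet w \ {v}).ncard :=
      Set.ncard_le_ncard_of_injOn _ hmaps hinj (Set.toFinite _)
    have h2 : (G.neighborSet w \ {v}).ncard = (G.neighborSet w).ncard - 1 := by
      rw [Set.ncard_diff_singleton_of_mem (by exact hwv.symm : v ∈ G.neighborSet w)]
    have h3 : (G.neighborSet w).ncard ≤ k := (hNG w) ▸ hdeg w
    omega
  intro S hSne
  by_contra hS
  push_neg at hS
  have hk' : ∀ x ∈ S, k ≤ (S ∩ (Identify G u v).neighborSet x).ncard := by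
    intro x hx
    have := hS x hx
    omega
  -- every x ∈ S with x ≠ u has all its neighbours in S
  have hclosedN : ∀ x ∈ S, (x : V) ≠ u → (Identify G u v).neighborSet x ⊆ S := by
    intro x hx hxu
    have h1 : S ∩ (Identify G u v).neighborSet x ⊆ (Identify G u v).neighborSet x :=
      Set.inter_subset_right
    have h2 := Set.eq_of_subset_of_ncard_le h1
      (le_trans (hbound x hxu) (hk' x hx)) (Set.toFinite _)
    intro y hy
    have hy2 : y ∈ S ∩ (Identify G u v).neighborSet x := by rw [h2]; exact hy
    exact hy2.1
  -- S contains an element different from u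
  have hex : ∃ x ∈ S, (x : V) ≠ u := by
    by_contra hc
    push_neg at hc
    obtain ⟨x, hx⟩ := hSne
    have hk0 := hk' x hx
    have : S ∩ (Identify G u v).neighborSet x = ∅ := by
      ext y
      simp only [Set.mem_inter_iff, Set.mem_empty_iff_false, iff_false]
      rintro ⟨hyS, hyN⟩
      have := ((Identify G u v).ne_of_adj hyN.symm)
      exact this (Subtype.ext ((hc y hyS).trans (hc x hx).symm))
    rw [this, Set.ncard_empty] at hk0
    omega
  obtain ⟨x₀, hx₀S, hx₀u⟩ := hex
  -- work in the induced graph on {u,v}ᶜ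
  have hconn : (G.induce ({u, v} : Set V)ᶜ).Connected := by
    apply h3c.2
    calc ({u, v} : Set V).ncard ≤ ({v} : Set V).ncard + 1 := Set.ncard_insert_le u {v}
      _ ≤ 2 := by rw [Set.ncard_singleton]
  set S₁ : Set (({u, v} : Set V)ᶜ : Set V) :=
    {x | ∃ h : (x : V) ≠ v, (⟨(x : V), h⟩ : {a : V // a ≠ v}) ∈ S} with hS₁
  have hmemC : ∀ x : V, x ≠ u → x ≠ v → x ∈ (({u, v} : Set V)ᶜ : Set V) := by
    intro x h1 h2
    simp [h1, h2]
  have hS₁ne : S₁.Nonempty := ⟨⟨(x₀ : V), hmemC _ hx₀u x₀.2⟩, x₀.2, by simpa using hx₀S⟩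
  have hS₁closed : ∀ ⦃x y⦄, x ∈ S₁ → (G.induce ({u, v} : Set V)ᶜ).Adj x y → y ∈ S₁ := by
    rintro x y ⟨hxv, hxS⟩ hadj
    have hyu : (y : V) ≠ u := by
      have := y.2
      simp only [Set.mem_compl_iff, Set.mem_insert_iff, Set.mem_singleton_iff] at this
      push_neg at this
      exact this.1
    have hyv : (y : V) ≠ v := by
      have := y.2
      simp only [Set.mem_compl_iff, Set.mem_insert_iff, Set.mem_singleton_iff] at this
      push_neg at this
      exact this.2
    have hxu : (x : V) ≠ u := by
      have := x.2
      simp only [Set.mem_compl_iff, Set.mem_insert_iff, Set.mem_singleton_iff] at this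
      push_neg at this
      exact this.1
    have hGadj : G.Adj (x : V) (y : V) := hadj
    have hyN : (⟨(y : V), hyv⟩ : {a : V // a ≠ v}) ∈
        (Identify G u v).neighborSet ⟨(x : V), hxv⟩ := by
      rw [SimpleGraph.mem_neighborSet, identify_adj huv (x := ⟨(x : V), hxv⟩) hxu]
      exact ⟨hGadj.ne, Or.inl hGadj⟩
    exact ⟨hyv, hclosedN _ hxS hxu hyN⟩
  have hwS₁ : (⟨w, hmemC w hwnu hwnv⟩ : (({u, v} : Set V)ᶜ : Set V)) ∈ S₁ :=
    aux_closed hconn hS₁closed hS₁ne _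
  obtain ⟨_, hwS⟩ := hwS₁
  have hwS' : (⟨w, hwnv⟩ : {a : V // a ≠ v}) ∈ S := hwS
  have := hk' _ hwS'
  have hle : (S ∩ (Identify G u v).neighborSet ⟨w, hwnv⟩).ncard ≤
      ((Identify G u v).neighborSet ⟨w, hwnv⟩).ncard :=
    Set.ncard_le_ncard Set.inter_subset_right (Set.toFinite _)
  omega

/-- for `k ≥ 3` and a 3-connected graph `G` of maximum degree `k`, if
`u` and `v` are non-adjacent with a common neighbour, then `G_{u+v}` is
`(k-1)`-degenerate. -/
theorem stmt5 {V : Type*} [Fintype V] [DecidableEq V] (k : ℕ) (hk : 3 ≤ k)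
    (G : SimpleGraph V) [DecidableRel G.Adj] (h3c : ThreeConnected G)
    (hdeg : ∀ w : V, G.degree w ≤ k)
    (u v : V) (hne : u ≠ v) (huv : ¬ G.Adj u v)
    (hcommon : ∃ w : V, G.Adj u w ∧ G.Adj v w) :
    Degenerate (Identify G u v) (k - 1) :=
  stmt5_aux k hk G h3c hdeg u v hne huv hcommon
end

section
/- For k ≥ 4, there is no k-regular connected non-complete graph G with a proper k-colouring α such that every Kempe change from α preserves the partition of the vertex set into colour classes. -/
/-! If every Kempe change from `α` only renames colours, then for any two colours `a ≠ b` the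
subgraph induced by the classes `a` and `b` is connected: otherwise swapping `a` and `b` on a single
component would split one class or merge two. A connected graph on `|A| + |B|` vertices has at
least `|A| + |B| - 1` edges, whereas, `G` being `k`-regular and `α` proper, exactly `k |A|` edges
leave a class `A`. Summing over the `k - 1` other classes gives `n + 1 ≤ 2 |A| + k` for every
class `A`. A non-complete `k`-regular graph has `n ≥ k + 2` vertices, so every class has at least
two vertices and `n ≥ 2 k`; summing over the classes, `k (n + 1) ≤ 2 n + k²`, which is impossible
once `k ≥ 4`. -/

open SimpleGraph
open scoped Classical

variable {V : Type*}

open Finset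

namespace SimpleGraph

variable [Fintype V] {G : SimpleGraph V} [DecidableRel G.Adj]

theorem IsRegularOfDegree.add_two_le_card_of_ne_top {k : ℕ} (hreg : G.IsRegularOfDegree k)
    (hG : G ≠ ⊤) : k + 2 ≤ Fintype.card V := by
  obtain ⟨v, w, hvw, hnadj⟩ : ∃ v w, v ≠ w ∧ ¬G.Adj v w := by
    by_contra! h
    exact hG (eq_top_iff.2 h)
  have hv : v ∉ G.neighborFinset v := by simp
  have hw : w ∉ insert v (G.neighborFinset v) := by simp [hvw.symm, hnadj]
  calc k + 2 = #(insert w (insert v (G.neighborFinset v))) := by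
        rw [card_insert_of_notMem hw, card_insert_of_notMem hv, card_neighborFinset_eq_degree,
          hreg v]
    _ ≤ Fintype.card V := card_le_univ _

theorem two_mul_card_le_sum_card_neighborFinset_inter_add_two {s : Finset V}
    (hs : (G.induce (s : Set V)).Preconnected) :
    2 * #s ≤ ∑ v ∈ s, #(G.neighborFinset v ∩ s) + 2 := by
  rcases s.eq_empty_or_nonempty with rfl | ⟨v, hv⟩
  · simp
  have : Nonempty (s : Set V) := ⟨⟨v, hv⟩⟩
  have hcard := (Connected.mk hs).card_vert_le_card_edgeSet_add_one
  have hdeg : ∑ v ∈ s, #(G.neighborFinset v ∩ s) =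
      2 * Nat.card (G.induce (s : Set V)).edgeSet := by
    rw [Nat.card_eq_fintype_card, ← edgeFinset_card, ← sum_degrees_eq_twice_card_edges,
      ← sum_coe_sort s]
    refine sum_congr rfl fun w _ => ?_
    rw [← card_neighborFinset_eq_degree, ← card_map (.subtype (· ∈ (s : Set V)))]
    congr 1
    ext u
    simp
  rw [Nat.card_coe_set_eq, Set.ncard_coe_finset] at hcard
  omega

end SimpleGraph

section Coloring

variable {ι : Type*}

def BichromaticPreconnected (G : SimpleGraph V) (α : V → ι) : Prop :=
  ∀ a b, a ≠ b → (G.induce {v | α v = a ∨ α v = b}).Preconnected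

variable [DecidableEq ι]

def colorClass [Fintype V] (α : V → ι) (a : ι) : Finset V := {v | α v = a}

def colorDegree [Fintype V] (G : SimpleGraph V) [DecidableRel G.Adj] (α : V → ι) (v : V)
    (b : ι) : ℕ :=
  #{u ∈ colorClass α b | G.Adj v u}

variable [Fintype V] {G : SimpleGraph V} [DecidableRel G.Adj] {α : V → ι}

@[simp] theorem mem_colorClass {v : V} {a : ι} : v ∈ colorClass α a ↔ α v = a := by
  simp [colorClass]

theorem sum_card_colorClass [Fintype ι] (α : V → ι) : ∑ a, #(colorClass α a) = Fintype.card V :=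
  (card_eq_sum_card_fiberwise fun v _ => mem_univ (α v)).symm

theorem SimpleGraph.IsRegularOfDegree.sum_colorDegree [Fintype ι] {d : ℕ}
    (hreg : G.IsRegularOfDegree d) (v : V) : ∑ b, colorDegree G α v b = d := by
  rw [← hreg v, ← card_neighborFinset_eq_degree,
    card_eq_sum_card_fiberwise fun u _ => mem_univ (α u)]
  refine sum_congr rfl fun b _ => congrArg card ?_
  ext u
  simp [and_comm]

theorem colorDegree_self (hα : ∀ ⦃u v⦄, G.Adj u v → α u ≠ α v) (v : V) :
    colorDegree G α v (α v) = 0 := by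
  simpa [colorDegree, filter_eq_empty_iff] using fun u hu huv => hα huv hu.symm

theorem sum_colorDegree_comm (a b : ι) :
    ∑ v ∈ colorClass α a, colorDegree G α v b = ∑ v ∈ colorClass α b, colorDegree G α v a := by
  have key := sum_card_bipartiteAbove_eq_sum_card_bipartiteBelow (s := colorClass α a)
    (t := colorClass α b) G.Adj
  simp only [bipartiteAbove, bipartiteBelow, adj_comm] at key
  exact key

theorem card_neighborFinset_inter_colorClass_union (hα : ∀ ⦃u v⦄, G.Adj u v → α u ≠ α v)
    {v : V} (b : ι) :
    #(G.neighborFinset v ∩ (colorClass α (α v) ∪ colorClass α b)) = colorDegree G α v b := by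
  refine congrArg card (ext fun u => ?_)
  simp only [mem_inter, mem_union, mem_neighborFinset, mem_colorClass, mem_filter]
  have := @hα v u
  tauto

theorem card_colorClass_add_card_le (hα : ∀ ⦃u v⦄, G.Adj u v → α u ≠ α v) {a b : ι}
    (hab : a ≠ b) (hpre : (G.induce {v | α v = a ∨ α v = b}).Preconnected) :
    #(colorClass α a) + #(colorClass α b) ≤ ∑ v ∈ colorClass α a, colorDegree G α v b + 1 := by
  have hs : ((colorClass α a ∪ colorClass α b : Finset V) : Set V) =
      {v | α v = a ∨ α v = b} := by
    ext
    simp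
  have hdisj : Disjoint (colorClass α a) (colorClass α b) := by
    simpa [Finset.disjoint_left] using fun v hva hvb => hab (hva.symm.trans hvb)
  have key := two_mul_card_le_sum_card_neighborFinset_inter_add_two (hs ▸ hpre)
  rw [card_union_of_disjoint hdisj, sum_union hdisj] at key
  have hcolor (c d : ι) : ∑ v ∈ colorClass α c,
      #(G.neighborFinset v ∩ (colorClass α c ∪ colorClass α d)) =
        ∑ v ∈ colorClass α c, colorDegree G α v d :=
    sum_congr rfl fun v hv =>
      mem_colorClass.1 hv ▸ card_neighborFinset_inter_colorClass_union hα d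
  rw [hcolor, union_comm, hcolor, sum_colorDegree_comm b a] at key
  omega

theorem BichromaticPreconnected.card_add_one_le [Fintype ι] (hbi : BichromaticPreconnected G α)
    (hreg : G.IsRegularOfDegree (Fintype.card ι)) (hα : ∀ ⦃u v⦄, G.Adj u v → α u ≠ α v)
    (a : ι) : Fintype.card V + 1 ≤ 2 * #(colorClass α a) + Fintype.card ι := by
  have hpair : ∀ b ∈ univ.erase a,
      #(colorClass α a) + #(colorClass α b) ≤ ∑ v ∈ colorClass α a, colorDegree G α v b + 1 :=
    fun b hb => card_colorClass_add_card_le hα (ne_of_mem_erase hb).symm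
      (hbi a b (ne_of_mem_erase hb).symm)
  have hsum := sum_le_sum hpair
  rw [sum_add_distrib, sum_add_distrib, sum_const, sum_const, smul_eq_mul, smul_eq_mul,
    mul_one] at hsum
  have hclasses : ∑ b ∈ univ.erase a, #(colorClass α b) + #(colorClass α a) = Fintype.card V :=
    (sum_erase_add _ _ (mem_univ a)).trans (sum_card_colorClass α)
  have hdeg : ∑ b ∈ univ.erase a, ∑ v ∈ colorClass α a, colorDegree G α v b =
      Fintype.card ι * #(colorClass α a) := by
    have hself : ∑ v ∈ colorClass α a, colorDegree G α v a = 0 :=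
      sum_eq_zero fun v hv => mem_colorClass.1 hv ▸ colorDegree_self hα v
    rw [← add_zero (∑ b ∈ _, _), ← hself, sum_erase_add _ _ (mem_univ a), sum_comm,
      sum_congr rfl fun v _ => hreg.sum_colorDegree v, sum_const, smul_eq_mul, mul_comm]
  have hcard : #(univ.erase a) + 1 = Fintype.card ι := card_erase_add_one (mem_univ a)
  rw [hdeg, ← hcard] at hsum
  linarith

end Coloring

section Kempe

variable {k : ℕ}

noncomputable def kempeSwap (G : SimpleGraph V) (α : V → Fin k) (a b : Fin k)
    (v0 : {x : V | α x = a ∨ α x = b}) : V → Fin k := fun v =>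
  if h : α v = a ∨ α v = b then
    if (G.induce {x : V | α x = a ∨ α x = b}).Reachable v0 ⟨v, h⟩
      then Equiv.swap a b (α v) else α v
  else α v

variable {G : SimpleGraph V} {α : V → Fin k}

theorem kempeStep_kempeSwap (a b : Fin k) (v0 : {x : V | α x = a ∨ α x = b}) :
    KempeStep G k α (kempeSwap G α a b v0) :=
  ⟨a, b, v0, fun _ => rfl⟩

theorem kempeSwap_of_reachable {a b : Fin k} {v0 v : {x : V | α x = a ∨ α x = b}}
    (h : (G.induce {x : V | α x = a ∨ α x = b}).Reachable v0 v) :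
    kempeSwap G α a b v0 v = Equiv.swap a b (α v) := by
  rw [kempeSwap, dif_pos (show α v = a ∨ α v = b from v.2)]
  exact if_pos h

theorem kempeSwap_of_not_reachable {a b : Fin k} {v0 v : {x : V | α x = a ∨ α x = b}}
    (h : ¬(G.induce {x : V | α x = a ∨ α x = b}).Reachable v0 v) :
    kempeSwap G α a b v0 v = α v := by
  rw [kempeSwap, dif_pos (show α v = a ∨ α v = b from v.2)]
  exact if_neg h

theorem bichromaticPreconnected_of_forall_kempeStep
    (h : ∀ c', KempeStep G k α c' → ∃ π : Equiv.Perm (Fin k), c' = ⇑π ∘ α) :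
    BichromaticPreconnected G α := by
  intro a b hab x y
  by_contra hxy
  obtain ⟨π, hπ⟩ := h _ (kempeStep_kempeSwap a b x)
  have hx : π (α x) = Equiv.swap a b (α x) :=
    (congrFun hπ x).symm.trans (kempeSwap_of_reachable (Reachable.refl x))
  have hy : π (α y) = α y := (congrFun hπ y).symm.trans (kempeSwap_of_not_reachable hxy)
  by_cases hcol : α x = α y
  · exact Equiv.swap_apply_ne_self_iff.2 ⟨hab, x.2⟩ (hx.symm.trans (hcol ▸ hy))
  · have hswap : Equiv.swap a b (α x) = α y := by
      rcases x.2 with hxa | hxb <;> rcases y.2 with hya | hyb <;>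
        simp_all [Equiv.swap_apply_left, Equiv.swap_apply_right]
    exact hcol (π.injective (hx.trans (hswap.trans hy.symm)))

end Kempe

theorem stmt16_general {V : Type*} [Fintype V] (k : ℕ) (hk : 4 ≤ k) (G : SimpleGraph V)
    [DecidableRel G.Adj] (hreg : G.IsRegularOfDegree k)
    (hnc : G ≠ ⊤) (α : V → Fin k) (hα : IsProperColoring G k α) :
    ∃ c' : V → Fin k, KempeStep G k α c' ∧
      ∀ π : Equiv.Perm (Fin k), c' ≠ ⇑π ∘ α := by
  by_contra! h
  have hbi := bichromaticPreconnected_of_forall_kempeStep h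
  have hclass (a : Fin k) : Fintype.card V + 1 ≤ 2 * #(colorClass α a) + k := by
    simpa using hbi.card_add_one_le (by simpa using hreg) hα a
  have hn := hreg.add_two_le_card_of_ne_top hnc
  have hsum := sum_card_colorClass α
  have hlarge : 2 * k ≤ Fintype.card V := by
    calc 2 * k = ∑ _a : Fin k, 2 := by simp [mul_comm]
      _ ≤ ∑ a, #(colorClass α a) := sum_le_sum fun a _ => by have := hclass a; omega
      _ = Fintype.card V := hsum
  have hdouble : k * (Fintype.card V + 1) ≤ 2 * Fintype.card V + k * k := by
    calc k * (Fintype.card V + 1) = ∑ _a : Fin k, (Fintype.card V + 1) := by simp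
      _ ≤ ∑ a, (2 * #(colorClass α a) + k) := sum_le_sum fun a _ => hclass a
      _ = 2 * Fintype.card V + k * k := by simp [sum_add_distrib, ← mul_sum, hsum]
  -- `(k - 2) n ≤ k (k - 1)` and `n ≥ 2 k` force `k ≤ 3`
  nlinarith

/-- for `k ≥ 4` there is no `k`-regular connected non-complete graph
with a proper `k`-colouring all of whose Kempe changes preserve the colour partition:
from any proper `k`-colouring `α` of such a graph, some Kempe change produces a
colouring that is not a colour-permutation of `α`. -/
theorem stmt16 {V : Type*} [Fintype V] (k : ℕ) (hk : 4 ≤ k) (G : SimpleGraph V)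
    [DecidableRel G.Adj] (hreg : G.IsRegularOfDegree k) (hconn : G.Connected)
    (hnc : G ≠ ⊤) (α : V → Fin k) (hα : IsProperColoring G k α) :
    ∃ c' : V → Fin k, KempeStep G k α c' ∧
      ∀ π : Equiv.Perm (Fin k), c' ≠ ⇑π ∘ α :=
  stmt16_general k hk G hreg hnc α hα
end

section
/- The triangular prism admits two proper 3-colourings that are not Kempe equivalent; in particular, in the triangular prism every Kempe change preserves the partition of the vertex set into colour classes. -/
open SimpleGraph
open scoped Classical

variable {V : Type*}

/-- The triangular prism `K_3 □ K_2`. -/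
def TriangularPrism : SimpleGraph (Fin 3 × Fin 2) :=
  (⊤ : SimpleGraph (Fin 3)) □ (⊤ : SimpleGraph (Fin 2))


lemma prism_adj {i i' : Fin 3} {j j' : Fin 2} :
    TriangularPrism.Adj (i, j) (i', j') ↔ (i ≠ i' ∧ j = j') ∨ (j ≠ j' ∧ i = i') := by
  simp [TriangularPrism, SimpleGraph.boxProd_adj]

/-- In a proper colouring and for two distinct colours `a`, `b`, the subgraph induced
on the vertices coloured `a` or `b` is (pre)connected. -/
lemma prism_key (c : Fin 3 × Fin 2 → Fin 3) (hc : IsProperColoring TriangularPrism 3 c)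
    {a b : Fin 3} (hab : a ≠ b) :
    ∀ u v : {x : Fin 3 × Fin 2 | c x = a ∨ c x = b},
    (TriangularPrism.induce {x : Fin 3 × Fin 2 | c x = a ∨ c x = b}).Reachable u v := by
  set S : Set (Fin 3 × Fin 2) := {x | c x = a ∨ c x = b} with hS
  intro u v
  have hinj : ∀ j : Fin 2, Function.Injective (fun i : Fin 3 => c (i, j)) := by
    intro j i i' h
    by_contra hne
    exact hc (prism_adj.mpr (Or.inl ⟨hne, rfl⟩)) h
  have hsurj : ∀ j : Fin 2, Function.Surjective (fun i : Fin 3 => c (i, j)) :=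
    fun j => Finite.surjective_of_injective (hinj j)
  obtain ⟨p0, hp0⟩ := hsurj 0 a
  obtain ⟨q0, hq0⟩ := hsurj 0 b
  obtain ⟨p1, hp1⟩ := hsurj 1 a
  obtain ⟨q1, hq1⟩ := hsurj 1 b
  simp only at hp0 hq0 hp1 hq1
  have hpq0 : p0 ≠ q0 := fun h => hab (hp0 ▸ h ▸ hq0)
  have hpq1 : p1 ≠ q1 := fun h => hab (hp1 ▸ h ▸ hq1)
  set A0 : S := ⟨(p0, 0), Or.inl hp0⟩ with hA0
  set B0 : S := ⟨(q0, 0), Or.inr hq0⟩ with hB0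
  set A1 : S := ⟨(p1, 1), Or.inl hp1⟩ with hA1
  set B1 : S := ⟨(q1, 1), Or.inr hq1⟩ with hB1
  have adj_of : ∀ (x y : S), TriangularPrism.Adj x.1 y.1 →
      (TriangularPrism.induce S).Adj x y := by
    intro x y h
    exact h
  have e0 : (TriangularPrism.induce S).Adj A0 B0 :=
    adj_of _ _ (prism_adj.mpr (Or.inl ⟨hpq0, rfl⟩))
  have e1 : (TriangularPrism.induce S).Adj A1 B1 :=
    adj_of _ _ (prism_adj.mpr (Or.inl ⟨hpq1, rfl⟩))
  -- A cross edge exists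
  have hcross : (TriangularPrism.induce S).Reachable A0 A1 := by
    have hA0ne : c (p0, 1) ≠ a := by
      intro h
      exact hc (prism_adj.mpr (Or.inr ⟨by decide, rfl⟩)) (hp0.trans h.symm)
    have hB0ne : c (q0, 1) ≠ b := by
      intro h
      exact hc (prism_adj.mpr (Or.inr ⟨by decide, rfl⟩)) (hq0.trans h.symm)
    by_cases hb : c (p0, 1) = b
    · -- path A0 — (p0,1) — A1
      have hmem : (p0, (1 : Fin 2)) ∈ S := Or.inr hb
      have hcol : p0 ≠ p1 := fun h => hab (hp1.symm.trans (h ▸ hb))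
      have w1 : (TriangularPrism.induce S).Adj A0 ⟨(p0, 1), hmem⟩ :=
        adj_of _ _ (prism_adj.mpr (Or.inr ⟨by decide, rfl⟩))
      have w2 : (TriangularPrism.induce S).Adj ⟨(p0, 1), hmem⟩ A1 :=
        adj_of _ _ (prism_adj.mpr (Or.inl ⟨hcol, rfl⟩))
      exact w1.reachable.trans w2.reachable
    · by_cases ha : c (q0, 1) = a
      · -- path A0 — B0 — (q0,1) — B1 — A1
        have hmem : (q0, (1 : Fin 2)) ∈ S := Or.inl ha
        have hcol : q0 ≠ q1 := fun h => hab (ha ▸ h ▸ hq1)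
        have w1 : (TriangularPrism.induce S).Adj B0 ⟨(q0, 1), hmem⟩ :=
          adj_of _ _ (prism_adj.mpr (Or.inr ⟨by decide, rfl⟩))
        have w2 : (TriangularPrism.induce S).Adj ⟨(q0, 1), hmem⟩ B1 :=
          adj_of _ _ (prism_adj.mpr (Or.inl ⟨hcol, rfl⟩))
        exact e0.reachable.trans (w1.reachable.trans (w2.reachable.trans e1.reachable.symm))
      · exfalso
        have hne : c (p0, 1) ≠ c (q0, 1) := fun h => hpq0 (hinj 1 h)
        have hfin : ∀ x y a b : Fin 3, x ≠ a → x ≠ b → y ≠ a → y ≠ b → a ≠ b → x = y := by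
          decide
        exact hne (hfin _ _ a b hA0ne hb ha hB0ne hab)
  have hub : ∀ w : S, (TriangularPrism.induce S).Reachable A0 w := by
    rintro ⟨⟨i, j⟩, hw⟩
    fin_cases j
    · rcases hw with h | h
      · have : i = p0 := hinj 0 (h.trans hp0.symm)
        subst this
        exact Reachable.refl _
      · have : i = q0 := hinj 0 (h.trans hq0.symm)
        subst this
        exact e0.reachable
    · rcases hw with h | h
      · have : i = p1 := hinj 1 (h.trans hp1.symm)
        subst this
        exact hcross
      · have : i = q1 := hinj 1 (h.trans hq1.symm)
        subst this
        exact hcross.trans e1.reachable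
  exact (hub u).symm.trans (hub v)

lemma prism_step_perm (c c' : Fin 3 × Fin 2 → Fin 3)
    (hc : IsProperColoring TriangularPrism 3 c)
    (h : KempeStep TriangularPrism 3 c c') :
    ∃ π : Equiv.Perm (Fin 3), c' = ⇑π ∘ c := by
  obtain ⟨a, b, v0, hc'⟩ := h
  by_cases hab : a = b
  · subst hab
    refine ⟨1, funext fun v => ?_⟩
    rw [hc' v]
    simp [Equiv.swap_self]
  · refine ⟨Equiv.swap a b, funext fun v => ?_⟩
    rw [hc' v]
    by_cases h : c v = a ∨ c v = b
    · rw [dif_pos h, if_pos (prism_key c hc hab v0 ⟨v, h⟩)]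
      rfl
    · rw [dif_neg h]
      push_neg at h
      simp [Function.comp, Equiv.swap_apply_of_ne_of_ne h.1 h.2]

lemma prism_equiv_perm (c c' : Fin 3 × Fin 2 → Fin 3)
    (hc : IsProperColoring TriangularPrism 3 c)
    (h : KempeEquiv TriangularPrism 3 c c') :
    ∃ π : Equiv.Perm (Fin 3), c' = ⇑π ∘ c := by
  induction h with
  | refl => exact ⟨1, rfl⟩
  | tail hsteps hstep ih =>
    obtain ⟨π, rfl⟩ := ih
    have hproper : IsProperColoring TriangularPrism 3 (⇑π ∘ c) :=
      fun u v hadj hne => hc hadj (π.injective hne)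
    obtain ⟨σ, rfl⟩ := prism_step_perm _ _ hproper hstep
    exact ⟨π.trans σ, by ext v; simp⟩

/-- The colouring of the prism that colours `(i, 0)` with `i` and `(i, 1)` with `i + t`. -/
def col (t : Fin 3) : Fin 3 × Fin 2 → Fin 3 := fun p => if p.2 = 0 then p.1 else p.1 + t

lemma col_proper (t : Fin 3) (ht : t ≠ 0) : IsProperColoring TriangularPrism 3 (col t) := by
  rintro ⟨i, j⟩ ⟨i', j'⟩ hadj
  rw [prism_adj] at hadj
  simp only [col]
  rcases hadj with ⟨hne, rfl⟩ | ⟨hne, rfl⟩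
  · split_ifs <;> simpa using hne
  · fin_cases j <;> fin_cases j' <;> simp_all <;>
      exact fun h => ht (self_eq_add_right.mp h)

/-- the triangular prism has two proper 3-colourings that are not Kempe
equivalent; moreover every Kempe change from a proper 3-colouring of the prism
preserves the partition into colour classes. -/
theorem stmt17 :
    (∃ c c' : Fin 3 × Fin 2 → Fin 3,
        IsProperColoring TriangularPrism 3 c ∧ IsProperColoring TriangularPrism 3 c' ∧
        ¬ KempeEquiv TriangularPrism 3 c c') ∧
    (∀ c c' : Fin 3 × Fin 2 → Fin 3, IsProperColoring TriangularPrism 3 c →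
        KempeStep TriangularPrism 3 c c' →
        ∃ π : Equiv.Perm (Fin 3), c' = ⇑π ∘ c) := by
  constructor
  · refine ⟨col 1, col 2, col_proper 1 (by decide), col_proper 2 (by decide), fun h => ?_⟩
    obtain ⟨π, hπ⟩ := prism_equiv_perm _ _ (col_proper 1 (by decide)) h
    have h1 := congrFun hπ ((0 : Fin 3), (0 : Fin 2))
    have h2 := congrFun hπ ((2 : Fin 3), (1 : Fin 2))
    simp only [Function.comp_apply] at h1 h2
    have key0 : col 1 ((2 : Fin 3), (1 : Fin 2)) = col 1 (0, 0) := by decide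
    have v1 : col 2 ((0 : Fin 3), (0 : Fin 2)) = 0 := by decide
    have v2 : col 2 ((2 : Fin 3), (1 : Fin 2)) = 1 := by decide
    rw [v1] at h1
    rw [v2, key0] at h2
    exact absurd (h1.trans h2.symm) (by decide)
  · exact fun c c' hc hs => prism_step_perm c c' hc hs
end

section
/- Let k ≥ 4 be an integer and let G be a 3-connected k-regular graph. Let u, v be vertices of G and (w1, w2) an eligible pair of neighbours of v, with {w1,w2} disjoint from the neighbourhood of u. If for every eligible pair (t1, t2) of neighbours of u there exists a proper k-colouring of G in which t1, t2 are coloured alike and w1, w2 are coloured alike, then the set of proper k-colourings of G forms a single Kempe class. -/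
open SimpleGraph
open scoped Classical

variable {V : Type*}

/-!
Let `x, y` be an eligible pair of neighbours of a vertex `m` in a 3-connected graph of
maximum degree `k`. The other vertices can be deleted one at a time so that each deleted
vertex has fewer than `k` neighbours among the remaining ones, except the first one, `m`,
which is adjacent to both `x` and `y`. Inducting along this order, any two `k`-colourings
in which `x, y` are alike are linked by Kempe changes that keep `x, y` alike: a Kempe change
of `G - z` lifts to `G`, possibly after recolouring `z`. Indeed `z` is only in the way when
two of its neighbours share a colour; when `z = m` the pair `x, y` gives a second repeated
colour, so in either case `z` sees at most `k - 2` colours and has a free one.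

By pigeonhole, every `k`-colouring colours some eligible pair of `u` alike; the hypothesis
links it to a colouring in which `w1, w2` are alike as well, and any two colourings with
`w1, w2` alike are linked through the common neighbour `v`.
-/

open Function Relation Set

section SwapOn

variable {α : Type*} {G : SimpleGraph V} {S D D' : Set V} {c c' : V → α} {a b : α} {x y : V}

def ProperOn (G : SimpleGraph V) (S : Set V) (c : V → α) : Prop :=
  ∀ ⦃p⦄, p ∈ S → ∀ ⦃q⦄, q ∈ S → G.Adj p q → c p ≠ c q

/-- `D` is a union of `(a, b)`-Kempe chains of `c` in the subgraph induced by `S`. -/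
structure IsKempeSet (G : SimpleGraph V) (S : Set V) (c : V → α) (a b : α) (D : Set V) :
    Prop where
  subset : D ⊆ S
  mem_pair : ∀ w ∈ D, c w = a ∨ c w = b
  closed : ∀ p ∈ D, ∀ q ∈ S, G.Adj p q → (c q = a ∨ c q = b) → q ∈ D

lemma IsKempeSet.congr (hD : IsKempeSet G S c a b D)
    (h : ∀ w ∈ S, (c' w = a ∨ c' w = b) ↔ (c w = a ∨ c w = b)) :
    IsKempeSet G S c' a b D where
  subset := hD.subset
  mem_pair w hw := (h w (hD.subset hw)).2 (hD.mem_pair w hw)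
  closed p hp q hq hpq hcq := hD.closed p hp q hq hpq ((h q hq).1 hcq)

lemma IsKempeSet.diff (hD : IsKempeSet G S c a b D) (hD' : IsKempeSet G S c a b D') :
    IsKempeSet G S c a b (D' \ D) where
  subset := sdiff_subset.trans hD'.subset
  mem_pair w hw := hD'.mem_pair w hw.1
  closed p hp q hq hpq hcq :=
    ⟨hD'.closed p hp.1 q hq hpq hcq, fun hqD =>
      hp.2 (hD.closed q hqD p (hD'.subset hp.1) hpq.symm (hD'.mem_pair p hp.1))⟩

variable [DecidableEq α]

noncomputable def swapOn (a b : α) (D : Set V) (c : V → α) : V → α :=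
  fun w => if w ∈ D then Equiv.swap a b (c w) else c w

def PairKempeStep (G : SimpleGraph V) (S : Set V) (x y : V) (c c' : V → α) : Prop :=
  ∃ a b D, IsKempeSet G S c a b D ∧ (x ∈ D ↔ y ∈ D) ∧ c' = swapOn a b D c

lemma swap_eq_or_eq_iff {t : α} :
    (Equiv.swap a b t = a ∨ Equiv.swap a b t = b) ↔ (t = a ∨ t = b) := by
  by_cases t = a <;> by_cases t = b <;> simp_all [Equiv.swap_apply_of_ne_of_ne]

lemma swapOn_of_mem {w : V} (hw : w ∈ D) : swapOn a b D c w = Equiv.swap a b (c w) :=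
  if_pos hw

lemma swapOn_of_notMem {w : V} (hw : w ∉ D) : swapOn a b D c w = c w :=
  if_neg hw

lemma swapOn_eq_or_eq_iff {w : V} :
    (swapOn a b D c w = a ∨ swapOn a b D c w = b) ↔ (c w = a ∨ c w = b) := by
  by_cases hw : w ∈ D
  · rw [swapOn_of_mem hw, swap_eq_or_eq_iff]
  · rw [swapOn_of_notMem hw]

@[simp] lemma swapOn_empty : swapOn a b ∅ c = c := by
  funext w
  simp [swapOn]

lemma swapOn_swapOn_of_disjoint (h : Disjoint D D') :
    swapOn a b D' (swapOn a b D c) = swapOn a b (D ∪ D') c := by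
  funext w
  by_cases hw : w ∈ D
  · have hw' : w ∉ D' := h.notMem_of_mem_left hw
    simp [swapOn, hw, hw']
  · simp [swapOn, hw]

lemma eqOn_swapOn {s : Set V} (hc : EqOn c c' s) (hD : ∀ w ∈ s, w ∈ D ↔ w ∈ D') :
    EqOn (swapOn a b D c) (swapOn a b D' c') s := by
  intro w hw
  simp only [swapOn, hD w hw, hc hw]

lemma isKempeSet_swapOn_iff :
    IsKempeSet G S (swapOn a b D' c) a b D ↔ IsKempeSet G S c a b D :=
  ⟨fun h => h.congr fun _ _ => swapOn_eq_or_eq_iff.symm,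
    fun h => h.congr fun _ _ => swapOn_eq_or_eq_iff⟩

lemma IsKempeSet.properOn_swapOn (hD : IsKempeSet G S c a b D) (hc : ProperOn G S c) :
    ProperOn G S (swapOn a b D c) := by
  have cross : ∀ ⦃p q⦄, p ∈ D → q ∈ S → q ∉ D → G.Adj p q →
      Equiv.swap a b (c p) ≠ c q := fun p q hp hq hqD hpq h =>
    hqD (hD.closed p hp q hq hpq (h ▸ swap_eq_or_eq_iff.2 (hD.mem_pair p hp)))
  intro p hp q hq hpq
  by_cases hpD : p ∈ D <;> by_cases hqD : q ∈ D
  · simpa [swapOn_of_mem hpD, swapOn_of_mem hqD] using hc hp hq hpq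
  · rw [swapOn_of_mem hpD, swapOn_of_notMem hqD]
    exact cross hpD hq hqD hpq
  · rw [swapOn_of_notMem hpD, swapOn_of_mem hqD]
    exact (cross hqD hp hpD hpq.symm).symm
  · simpa [swapOn_of_notMem hpD, swapOn_of_notMem hqD] using hc hp hq hpq

lemma PairKempeStep.properOn_and_eq (h : PairKempeStep G S x y c c')
    (hc : ProperOn G S c) (hxy : c x = c y) : ProperOn G S c' ∧ c' x = c' y := by
  obtain ⟨a, b, D, hD, hDxy, rfl⟩ := h
  refine ⟨hD.properOn_swapOn hc, ?_⟩
  by_cases hx : x ∈ D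
  · rw [swapOn_of_mem hx, swapOn_of_mem (hDxy.1 hx), hxy]
  · rw [swapOn_of_notMem hx, swapOn_of_notMem (mt hDxy.2 hx), hxy]

lemma PairKempeStep.properOn_and_eq_of_reflTransGen
    (h : ReflTransGen (PairKempeStep G S x y) c c') (hc : ProperOn G S c) (hxy : c x = c y) :
    ProperOn G S c' ∧ c' x = c' y := by
  induction h with
  | refl => exact ⟨hc, hxy⟩
  | tail _ hstep ih => exact hstep.properOn_and_eq ih.1 ih.2

end SwapOn

section KempeChain

variable {k : ℕ} {G : SimpleGraph V} {c c' c'' : V → Fin k} {a b : Fin k} {D : Set V}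

lemma KempeEquiv.trans (h : KempeEquiv G k c c') (h' : KempeEquiv G k c' c'') :
    KempeEquiv G k c c'' :=
  ReflTransGen.trans h h'

def kempeChain (G : SimpleGraph V) (c : V → Fin k) (a b : Fin k)
    (v₀ : {x : V | c x = a ∨ c x = b}) : Set V :=
  {w | ∃ h : c w = a ∨ c w = b, (G.induce {x | c x = a ∨ c x = b}).Reachable v₀ ⟨w, h⟩}

lemma kempeStep_swapOn_kempeChain (v₀ : {x : V | c x = a ∨ c x = b}) :
    KempeStep G k c (swapOn a b (kempeChain G c a b v₀) c) := by
  refine ⟨a, b, v₀, fun w => ?_⟩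
  by_cases hw : c w = a ∨ c w = b <;> simp [swapOn, kempeChain, hw]

lemma isKempeSet_kempeChain (v₀ : {x : V | c x = a ∨ c x = b}) :
    IsKempeSet G univ c a b (kempeChain G c a b v₀) where
  subset := subset_univ _
  mem_pair _ hw := hw.1
  closed _ hp _ _ hpq hcq := ⟨hcq, hp.2.trans (SimpleGraph.Adj.reachable hpq)⟩

lemma IsKempeSet.kempeChain_subset (hD : IsKempeSet G univ c a b D)
    {v₀ : {x : V | c x = a ∨ c x = b}} (hv₀ : ↑v₀ ∈ D) :
    kempeChain G c a b v₀ ⊆ D := by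
  rintro w ⟨hw, ⟨walk⟩⟩
  by_contra hwD
  obtain ⟨d, -, hd₁, hd₂⟩ := walk.exists_boundary_dart (Subtype.val ⁻¹' D) hv₀ hwD
  exact hd₂ (hD.closed _ hd₁ _ (mem_univ _) d.adj d.snd.2)

lemma IsKempeSet.kempeEquiv [Finite V] (hD : IsKempeSet G univ c a b D) :
    KempeEquiv G k c (swapOn a b D c) := by
  induction D using WellFoundedLT.induction generalizing c with
  | _ D ih =>
  rcases D.eq_empty_or_nonempty with rfl | ⟨v₀, hv₀⟩
  · rw [swapOn_empty]
    exact .refl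
  set C := kempeChain G c a b ⟨v₀, hD.mem_pair v₀ hv₀⟩
  have hCD : C ⊆ D := hD.kempeChain_subset hv₀
  have hv₀C : v₀ ∈ C := ⟨_, .refl _⟩
  have hrest : IsKempeSet G univ (swapOn a b C c) a b (D \ C) :=
    isKempeSet_swapOn_iff.2 ((isKempeSet_kempeChain _).diff hD)
  have h := ih (D \ C) (sdiff_ssubset_left_iff.2 ⟨v₀, hv₀, hv₀C⟩) hrest
  rw [swapOn_swapOn_of_disjoint disjoint_sdiff_right, union_sdiff_cancel hCD] at h
  exact .head (kempeStep_swapOn_kempeChain _) h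

lemma PairKempeStep.kempeEquiv [Finite V] {x y : V} (h : PairKempeStep G univ x y c c') :
    KempeEquiv G k c c' := by
  obtain ⟨a, b, D, hD, -, rfl⟩ := h
  exact hD.kempeEquiv

end KempeChain

section Lift

variable {k : ℕ} {G : SimpleGraph V} {S D : Set V} {e : V → Fin k} {a b f : Fin k} {x y z : V}

lemma IsKempeSet.of_diff_singleton (hD : IsKempeSet G (S \ {z}) e a b D)
    (hz : ∀ p ∈ D, G.Adj p z → ¬(e z = a ∨ e z = b)) : IsKempeSet G S e a b D where
  subset := hD.subset.trans sdiff_subset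
  mem_pair := hD.mem_pair
  closed p hp q hq hpq hcq := by
    rcases eq_or_ne q z with rfl | hqz
    · exact absurd hcq (hz p hp hpq)
    · exact hD.closed p hp q ⟨hq, hqz⟩ hpq hcq

lemma IsKempeSet.insert_of_diff_singleton (hD : IsKempeSet G (S \ {z}) e a b D) (hzS : z ∈ S)
    (hez : e z = a ∨ e z = b)
    (hz : ∀ q ∈ S, G.Adj z q → (e q = a ∨ e q = b) → q ∈ D) :
    IsKempeSet G S e a b (insert z D) where
  subset := insert_subset hzS (hD.subset.trans sdiff_subset)
  mem_pair := by
    rintro w (rfl | hw)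
    exacts [hez, hD.mem_pair w hw]
  closed := by
    rintro p (rfl | hp) q hq hpq hcq
    · exact Or.inr (hz q hq hpq hcq)
    · rcases eq_or_ne q z with rfl | hqz
      · exact Or.inl rfl
      · exact Or.inr (hD.closed p hp q ⟨hq, hqz⟩ hpq hcq)

lemma pairKempeStep_update (hzS : z ∈ S) (hx : x ≠ z) (hy : y ≠ z)
    (hfree : ∀ q ∈ S, G.Adj z q → e q ≠ e z ∧ e q ≠ f) :
    PairKempeStep G S x y e (update e z f) := by
  refine ⟨e z, f, {z}, ⟨singleton_subset_iff.2 hzS, ?_, ?_⟩, by simp [hx, hy], ?_⟩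
  · rintro w rfl
    exact Or.inl rfl
  · rintro p rfl q hq hpq hcq
    exact absurd hcq (not_or.2 (hfree q hq hpq))
  · funext w
    rcases eq_or_ne w z with rfl | hw
    · simp [swapOn]
    · simp [swapOn, hw]

lemma image_diff_singleton_eq_of_eq {N : Set V} {r t : V} (ht : t ∈ N) (htr : t ≠ r)
    (het : e t = e r) : e '' (N \ {r}) = e '' N := by
  refine (image_mono sdiff_subset).antisymm ?_
  rintro _ ⟨w, hw, rfl⟩
  by_cases hwr : w = r
  · exact ⟨t, ⟨ht, htr⟩, hwr ▸ het⟩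
  · exact ⟨w, ⟨hw, hwr⟩, rfl⟩

lemma ncard_image_lt_of_eq {N : Set V} (hN : N.Finite) {p q : V} (hp : p ∈ N) (hq : q ∈ N)
    (hpq : p ≠ q) (he : e p = e q) : (e '' N).ncard < N.ncard :=
  (ncard_image_le hN).lt_of_ne fun h => hpq ((ncard_image_iff hN).1 h hp hq he)

lemma ncard_image_add_two_le {N : Set V} (hN : N.Finite) (hx : x ∈ N) (hy : y ∈ N)
    (hxy : x ≠ y) (hexy : e x = e y) {r t : V} (hr : r ∈ N) (hrx : r ≠ x) (hry : r ≠ y)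
    (ht : t ∈ N) (htr : t ≠ r) (het : e t = e r) : (e '' N).ncard + 2 ≤ N.ncard := by
  rw [← image_diff_singleton_eq_of_eq ht htr het]
  have hlt :=
    ncard_image_lt_of_eq (N := N \ {r}) hN.sdiff ⟨hx, hrx.symm⟩ ⟨hy, hry.symm⟩ hxy hexy
  have hcard := ncard_sdiff_singleton_add_one hr hN
  omega

lemma exists_ne_notMem_image {N : Set V} (hN : (e '' N).ncard + 1 < k) (a : Fin k) :
    ∃ f, f ≠ a ∧ f ∉ e '' N := by
  have hlt : (insert a (e '' N)).ncard < Nat.card (Fin k) := by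
    have := ncard_insert_le a (e '' N)
    rw [Nat.card_fin]
    omega
  obtain ⟨f, hf⟩ := (ne_univ_iff_exists_notMem (insert a (e '' N))).1 fun h => by
    rw [h, ncard_univ] at hlt
    exact hlt.false
  exact ⟨f, fun h => hf (h ▸ mem_insert f _), fun h => hf (mem_insert_of_mem a h)⟩

lemma exists_ne_notMem_image_neighbors [Finite V] (hdeg : (G.neighborSet z).ncard ≤ k)
    (hz : (S ∩ G.neighborSet z).ncard < k ∨ (G.Adj z x ∧ G.Adj z y)) (hxS : x ∈ S)
    (hyS : y ∈ S) (hxy : x ≠ y) (hexy : e x = e y) {r t : V} (hr : r ∈ S ∩ G.neighborSet z)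
    (ht : t ∈ S ∩ G.neighborSet z) (htr : t ≠ r) (het : e t = e r) (hrx : r ≠ x)
    (hry : r ≠ y) (a : Fin k) : ∃ f, f ≠ a ∧ f ∉ e '' (S ∩ G.neighborSet z) := by
  refine exists_ne_notMem_image ?_ a
  have hN : (S ∩ G.neighborSet z).ncard ≤ k := (ncard_le_ncard inter_subset_right).trans hdeg
  rcases hz with hlt | ⟨hzx, hzy⟩
  · have := ncard_image_lt_of_eq (toFinite _) ht hr htr het
    omega
  · have := ncard_image_add_two_le (N := S ∩ G.neighborSet z) (toFinite _) ⟨hxS, hzx⟩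
      ⟨hyS, hzy⟩ hxy hexy hr hrx hry ht htr het
    omega

lemma IsKempeSet.exists_free_colour [Finite V] (hD : IsKempeSet G (S \ {z}) e a b D)
    (hDxy : x ∈ D ↔ y ∈ D) (he : ProperOn G S e) (hzS : z ∈ S)
    (hdeg : (G.neighborSet z).ncard ≤ k)
    (hz : (S ∩ G.neighborSet z).ncard < k ∨ (G.Adj z x ∧ G.Adj z y)) (hxS : x ∈ S)
    (hyS : y ∈ S) (hxy : x ≠ y) (hexy : e x = e y) {p q : V} (hpD : p ∈ D) (hpz : G.Adj p z)
    (hez : e z = a ∨ e z = b) (hqS : q ∈ S) (hzq : G.Adj z q) (heq : e q = a ∨ e q = b)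
    (hqD : q ∉ D) :
    ∃ f, ¬(f = a ∨ f = b) ∧ ∀ w ∈ S, G.Adj z w → e w ≠ e z ∧ e w ≠ f := by
  -- `p` and `q` both carry the colour of `{a, b}` other than that of `z`
  have hpS : p ∈ S := (hD.subset hpD).1
  have hep := hD.mem_pair p hpD
  have hepz : e p ≠ e z := he hpS hzS hpz
  have heqz : e q ≠ e z := he hqS hzS hzq.symm
  have hpq : e q = e p := by grind
  have hqp : q ≠ p := fun h => hqD (h ▸ hpD)
  have hpN : p ∈ S ∩ G.neighborSet z := ⟨hpS, hpz.symm⟩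
  have hqN : q ∈ S ∩ G.neighborSet z := ⟨hqS, hzq⟩
  obtain ⟨f, hfz, hfN⟩ : ∃ f, f ≠ e z ∧ f ∉ e '' (S ∩ G.neighborSet z) := by
    by_cases hp : p ≠ x ∧ p ≠ y
    · exact exists_ne_notMem_image_neighbors hdeg hz hxS hyS hxy hexy hpN hqN hqp hpq
        hp.1 hp.2 _
    · have hq : q ≠ x ∧ q ≠ y := by grind
      exact exists_ne_notMem_image_neighbors hdeg hz hxS hyS hxy hexy hqN hpN hqp.symm
        hpq.symm hq.1 hq.2 _
  have hfp : f ≠ e p := fun h => hfN ⟨p, hpN, h.symm⟩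
  exact ⟨f, by grind, fun w hw hzw =>
    ⟨he hw hzS hzw.symm, fun h => hfN ⟨w, ⟨hw, hzw⟩, h⟩⟩⟩

end Lift

section PairKempeChains

variable {k : ℕ} {G : SimpleGraph V} {S : Set V} {x y z : V}

lemma exists_lift_pairKempeStep [Finite V] (hzS : z ∈ S) (hx : x ≠ z) (hy : y ≠ z)
    (hdeg : (G.neighborSet z).ncard ≤ k)
    (hz : (S ∩ G.neighborSet z).ncard < k ∨ (G.Adj z x ∧ G.Adj z y)) (hxS : x ∈ S)
    (hyS : y ∈ S) (hxy : x ≠ y) {d d' e : V → Fin k}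
    (hstep : PairKempeStep G (S \ {z}) x y d d') (he : ProperOn G S e) (hexy : e x = e y)
    (hed : EqOn e d {z}ᶜ) :
    ∃ e', EqOn e' d' {z}ᶜ ∧ ReflTransGen (PairKempeStep G S x y) e e' := by
  obtain ⟨a, b, D, hD, hDxy, rfl⟩ := hstep
  replace hD : IsKempeSet G (S \ {z}) e a b D := hD.congr fun w hw => by rw [hed hw.2]
  by_cases hsafe : ∀ p ∈ D, G.Adj p z → ¬(e z = a ∨ e z = b)
  · exact ⟨_, eqOn_swapOn hed fun _ _ => Iff.rfl,
      .single ⟨a, b, D, hD.of_diff_singleton hsafe, hDxy, rfl⟩⟩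
  push Not at hsafe
  obtain ⟨p, hpD, hpz, hez⟩ := hsafe
  by_cases hjoin : ∀ q ∈ S, G.Adj z q → (e q = a ∨ e q = b) → q ∈ D
  · refine ⟨_, eqOn_swapOn hed fun w hw => ?_,
      .single ⟨a, b, insert z D, hD.insert_of_diff_singleton hzS hez hjoin, ?_, rfl⟩⟩
    · simp [show w ≠ z from hw]
    · simpa [hx, hy] using hDxy
  push Not at hjoin
  obtain ⟨q, hqS, hzq, heq, hqD⟩ := hjoin
  obtain ⟨f, hfab, hfree⟩ :=
    hD.exists_free_colour hDxy he hzS hdeg hz hxS hyS hxy hexy hpD hpz hez hqS hzq heq hqD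
  have hrecolour : PairKempeStep G S x y e (update e z f) := pairKempeStep_update hzS hx hy hfree
  have hee₁ : EqOn (update e z f) e {z}ᶜ := fun w hw => update_of_ne hw _ _
  have hD₁ : IsKempeSet G S (update e z f) a b D :=
    (hD.congr fun w hw => by rw [hee₁ hw.2]).of_diff_singleton fun _ _ _ => by simpa using hfab
  exact ⟨_, eqOn_swapOn (hee₁.trans hed) fun _ _ => Iff.rfl,
    .tail (.single hrecolour) ⟨a, b, D, hD₁, hDxy, rfl⟩⟩

lemma exists_lift_reflTransGen_pairKempeStep [Finite V] (hzS : z ∈ S) (hx : x ≠ z)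
    (hy : y ≠ z) (hdeg : (G.neighborSet z).ncard ≤ k)
    (hz : (S ∩ G.neighborSet z).ncard < k ∨ (G.Adj z x ∧ G.Adj z y)) (hxS : x ∈ S)
    (hyS : y ∈ S) (hxy : x ≠ y) {d d' e : V → Fin k}
    (hchain : ReflTransGen (PairKempeStep G (S \ {z}) x y) d d') (he : ProperOn G S e)
    (hexy : e x = e y) (hed : EqOn e d {z}ᶜ) :
    ∃ e', EqOn e' d' {z}ᶜ ∧ ReflTransGen (PairKempeStep G S x y) e e' := by
  induction hchain with
  | refl => exact ⟨e, hed, .refl⟩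
  | tail _ hstep ih =>
    obtain ⟨e₁, hed₁, hee₁⟩ := ih
    obtain ⟨he₁, he₁xy⟩ := PairKempeStep.properOn_and_eq_of_reflTransGen hee₁ he hexy
    obtain ⟨e₂, hed₂, he₁e₂⟩ :=
      exists_lift_pairKempeStep hzS hx hy hdeg hz hxS hyS hxy hstep he₁ he₁xy hed₁
    exact ⟨e₂, hed₂, hee₁.trans he₁e₂⟩

def PeelableTo (G : SimpleGraph V) (k : ℕ) (x y : V) : Prop :=
  ∀ T : Set V, {x, y} ⊂ T → ∃ z ∈ T, z ≠ x ∧ z ≠ y ∧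
    ((T ∩ G.neighborSet z).ncard < k ∨ (G.Adj z x ∧ G.Adj z y))

theorem reflTransGen_pairKempeStep [Finite V] (hdeg : ∀ w, (G.neighborSet w).ncard ≤ k)
    (hpeel : PeelableTo G k x y) (hxy : x ≠ y) (hS : {x, y} ⊆ S) {c c' : V → Fin k}
    (hc : ProperOn G S c) (hc' : ProperOn G S c') (hcxy : c x = c y) (hcxy' : c' x = c' y)
    (hcc' : EqOn c c' Sᶜ) : ReflTransGen (PairKempeStep G S x y) c c' := by
  induction S using WellFoundedLT.induction generalizing c c' with
  | _ S ih =>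
  have hxS : x ∈ S := hS (mem_insert x _)
  have hyS : y ∈ S := hS (mem_insert_of_mem x rfl)
  rcases hS.eq_or_ssubset with rfl | hsub
  · refine .single
      ⟨c x, c' x, {x, y}, ⟨subset_rfl, ?_, fun _ _ q hq _ _ => hq⟩, by simp, ?_⟩
    · rintro w (rfl | rfl)
      exacts [Or.inl rfl, Or.inl hcxy.symm]
    · funext w
      by_cases hw : w ∈ ({x, y} : Set V)
      · rw [swapOn_of_mem hw]
        rcases hw with rfl | rfl
        · exact (Equiv.swap_apply_left _ _).symm
        · rw [← hcxy, ← hcxy', Equiv.swap_apply_left]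
      · rw [swapOn_of_notMem hw, hcc' hw]
  obtain ⟨z, hzS, hzx, hzy, hz⟩ := hpeel S hsub
  -- recurse on `S \ {z}` towards `c'` recoloured at `z` to agree with `c`
  have hchain : ReflTransGen (PairKempeStep G (S \ {z}) x y) c (update c' z (c z)) := by
    refine ih _ (sdiff_singleton_ssubset.2 hzS) (insert_subset ⟨hxS, hzx.symm⟩
      (singleton_subset_iff.2 ⟨hyS, hzy.symm⟩)) (fun p hp q hq hpq => hc hp.1 hq.1 hpq)
      (fun p hp q hq hpq => ?_) hcxy ?_ ?_
    · simpa [update_of_ne hp.2, update_of_ne hq.2] using hc' hp.1 hq.1 hpq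
    · simpa [update_of_ne hzx.symm, update_of_ne hzy.symm] using hcxy'
    · intro w hw
      rcases eq_or_ne w z with rfl | hwz
      · simp
      · rw [update_of_ne hwz]
        exact hcc' fun hwS => hw ⟨hwS, hwz⟩
  obtain ⟨e, hec', hce⟩ := exists_lift_reflTransGen_pairKempeStep hzS hzx.symm hzy.symm
    (hdeg z) hz hxS hyS hxy hchain hc hcxy fun _ _ => rfl
  have he := (PairKempeStep.properOn_and_eq_of_reflTransGen hce hc hcxy).1
  have hec : EqOn e c' {z}ᶜ := fun w hw => (hec' hw).trans (update_of_ne hw _ _)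
  have hfinal : update e z (c' z) = c' := update_eq_iff.2 ⟨rfl, fun w hw => hec hw⟩
  refine hfinal ▸ hce.tail (pairKempeStep_update hzS hzx.symm hzy.symm fun q hq hzq => ?_)
  refine ⟨he hq hzS hzq.symm, ?_⟩
  rw [hec (show q ≠ z from hzq.ne')]
  exact hc' hq hzS hzq.symm

theorem kempeEquiv_of_eq_of_eq [Finite V] (hdeg : ∀ w, (G.neighborSet w).ncard ≤ k)
    (hpeel : PeelableTo G k x y) (hxy : x ≠ y) {c c' : V → Fin k}
    (hc : IsProperColoring G k c) (hc' : IsProperColoring G k c') (hcxy : c x = c y)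
    (hcxy' : c' x = c' y) : KempeEquiv G k c c' :=
  reflTransGen_closed (r := PairKempeStep G univ x y) (fun _ _ h => h.kempeEquiv) _ _
    (reflTransGen_pairKempeStep hdeg hpeel hxy (subset_univ _) (fun _ _ _ _ h => hc h)
      (fun _ _ _ _ h => hc' h) hcxy hcxy' (by simp [EqOn]))

end PairKempeChains

section Eligible

variable {k : ℕ} {G : SimpleGraph V} {x y m : V}

lemma peelableTo_of_connected [Finite V] (hdeg : ∀ w, (G.neighborSet w).ncard ≤ k)
    (hconn : (G.induce ({x, y} : Set V)ᶜ).Connected) (hmx : G.Adj m x) (hmy : G.Adj m y) :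
    PeelableTo G k x y := by
  intro T hT
  by_cases hTuniv : T = univ
  · exact ⟨m, hTuniv ▸ mem_univ m, hmx.ne, hmy.ne, Or.inr ⟨hmx, hmy⟩⟩
  obtain ⟨s, hsT, hsxy⟩ := exists_of_ssubset hT
  obtain ⟨w, hwT⟩ := (ne_univ_iff_exists_notMem T).1 hTuniv
  have hwxy : w ∉ ({x, y} : Set V) := fun h => hwT (hT.subset h)
  -- an edge leaving `T` inside `G - x - y` gives a vertex of `T` with a neighbour outside `T`
  obtain ⟨d, -, hd₁, hd₂⟩ := (hconn.preconnected ⟨s, hsxy⟩ ⟨w, hwxy⟩).some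
    |>.exists_boundary_dart (Subtype.val ⁻¹' T) hsT hwT
  refine ⟨d.fst, hd₁, fun h => d.fst.2 (Or.inl h), fun h => d.fst.2 (Or.inr h), Or.inl ?_⟩
  calc (T ∩ G.neighborSet d.fst).ncard < (G.neighborSet d.fst).ncard :=
        ncard_lt_ncard ⟨inter_subset_right, fun h => hd₂ (h d.adj).1⟩
    _ ≤ k := hdeg _

lemma SimpleGraph.IsRegularOfDegree.ncard_neighborSet [G.LocallyFinite]
    (hreg : G.IsRegularOfDegree k) (v : V) : (G.neighborSet v).ncard = k := by
  rw [← coe_neighborFinset, ncard_coe_finset, card_neighborFinset_eq_degree, hreg v]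

lemma SimpleGraph.IsRegularOfDegree.exists_eligible_pair_eq [G.LocallyFinite]
    (hreg : G.IsRegularOfDegree k) {c : V → Fin k} (hc : IsProperColoring G k c) (u : V) :
    ∃ t1 t2, G.Adj u t1 ∧ G.Adj u t2 ∧ t1 ≠ t2 ∧ ¬G.Adj t1 t2 ∧ c t1 = c t2 := by
  have hk := (c u).pos
  obtain ⟨t1, ht1, t2, ht2, ht, hct⟩ := exists_ne_map_eq_of_ncard_lt_of_maps_to
    (s := G.neighborSet u) (t := {c u}ᶜ)
    (by rw [ncard_compl, ncard_singleton, Nat.card_fin, hreg.ncard_neighborSet]; omega)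
    (fun t ht => (hc ht).symm)
  exact ⟨t1, t2, ht1, ht2, ht, fun h => hc h hct, hct⟩

end Eligible

theorem stmt19_general {V : Type*} [Fintype V] (k : ℕ) (G : SimpleGraph V)
    [DecidableRel G.Adj] (hreg : G.IsRegularOfDegree k) (h3c : ThreeConnected G)
    (u v : V) (w1 w2 : V) (hw1 : G.Adj v w1) (hw2 : G.Adj v w2)
    (hwne : w1 ≠ w2)
    (hpairs : ∀ t1 t2 : V, G.Adj u t1 → G.Adj u t2 → t1 ≠ t2 → ¬ G.Adj t1 t2 →
      ∃ c : V → Fin k, IsProperColoring G k c ∧ c t1 = c t2 ∧ c w1 = c w2) :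
    KempeClass G k := by
  intro c c' hc hc'
  have hdeg : ∀ w, (G.neighborSet w).ncard ≤ k := fun w => (hreg.ncard_neighborSet w).le
  have hpeel : ∀ {m x y : V}, G.Adj m x → G.Adj m y → x ≠ y → PeelableTo G k x y :=
    fun hmx hmy hxy => peelableTo_of_connected hdeg (h3c.2 _ (ncard_pair hxy).le) hmx hmy
  obtain ⟨t1, t2, hut1, hut2, ht, htnadj, hct⟩ := hreg.exists_eligible_pair_eq hc u
  obtain ⟨t1', t2', hut1', hut2', ht', htnadj', hct'⟩ := hreg.exists_eligible_pair_eq hc' u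
  obtain ⟨c₀, hc₀, hc₀t, hc₀w⟩ := hpairs t1 t2 hut1 hut2 ht htnadj
  obtain ⟨c₀', hc₀', hc₀t', hc₀w'⟩ := hpairs t1' t2' hut1' hut2' ht' htnadj'
  exact ((kempeEquiv_of_eq_of_eq hdeg (hpeel hut1 hut2 ht) ht hc hc₀ hct hc₀t).trans
    (kempeEquiv_of_eq_of_eq hdeg (hpeel hw1 hw2 hwne) hwne hc₀ hc₀' hc₀w hc₀w')).trans
    (kempeEquiv_of_eq_of_eq hdeg (hpeel hut1' hut2' ht') ht' hc₀' hc' hc₀t' hct')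

/-- let `G` be 3-connected and `k`-regular (`k ≥ 4`), let `(w1, w2)` be
an eligible pair of neighbours of `v` with neither `w1` nor `w2` adjacent to `u`. If
for every eligible pair `(t1, t2)` of neighbours of `u` there is a proper
`k`-colouring with `t1, t2` coloured alike and `w1, w2` coloured alike, then the
proper `k`-colourings of `G` form a single Kempe class. -/
theorem stmt19 {V : Type*} [Fintype V] (k : ℕ) (hk : 4 ≤ k) (G : SimpleGraph V)
    [DecidableRel G.Adj] (hreg : G.IsRegularOfDegree k) (h3c : ThreeConnected G)
    (u v : V) (w1 w2 : V) (hw1 : G.Adj v w1) (hw2 : G.Adj v w2)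
    (hwne : w1 ≠ w2) (hwnadj : ¬ G.Adj w1 w2)
    (hw1u : ¬ G.Adj u w1) (hw2u : ¬ G.Adj u w2)
    (hpairs : ∀ t1 t2 : V, G.Adj u t1 → G.Adj u t2 → t1 ≠ t2 → ¬ G.Adj t1 t2 →
      ∃ c : V → Fin k, IsProperColoring G k c ∧ c t1 = c t2 ∧ c w1 = c w2) :
    KempeClass G k :=
  stmt19_general k G hreg h3c u v w1 w2 hw1 hw2 hwne hpairs
end
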